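/- arXiv:1611.04406 — 3 statements merged into one kernel-verified Lean document; each statement's English description precedes it below -/
import Mathlib

section
/- The explicit formula q1 = (α + δ + ω + S̄ − √((α − (ω + S̄))² + δ(δ + 2(α + ω + S̄))))/(2S̄) satisfies the fixed point equation f1(q1, q2) = q1, where q2 = ω/(ω + S̄(1 − q1)) and f1(u1,u2) = (α + δ·u1·u2 + S̄·u1²)/(α + δ + S̄), assuming α, δ, ω, S̄ > 0. -/
/-!
The radicand equals `(α + δ + ω + S)² - 4α(ω + S)`, so `q₁` is the smaller root of
`S²q² - S(α + δ + ω + S)q + α(ω + S) = 0`. After substituting `q₂ = ω / (ω + S(1 - q₁))` and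
clearing denominators, the fixed point equation is `(1 - q₁)` times this quadratic. The denominator
is positive because the radicand exceeds `(α + δ - ω - S)²` by `4δ(ω + S)`.
-/

lemma fixedPoint_of_quadratic {α δ ω S q : ℝ} (hαδS : α + δ + S ≠ 0) (hK : ω + S * (1 - q) ≠ 0)
    (hq : S ^ 2 * q ^ 2 - S * (α + δ + ω + S) * q + α * (ω + S) = 0) :
    (α + δ * q * (ω / (ω + S * (1 - q))) + S * q ^ 2) / (α + δ + S) = q := by
  rw [div_eq_iff hαδS]
  field_simp
  linear_combination (1 - q) * hq

section Root

variable {α δ ω S D : ℝ}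

lemma quadratic_smallerRoot (hS : S ≠ 0)
    (hD : D ^ 2 = (α - (ω + S)) ^ 2 + δ * (δ + 2 * (α + ω + S))) :
    let q := (α + δ + ω + S - D) / (2 * S)
    S ^ 2 * q ^ 2 - S * (α + δ + ω + S) * q + α * (ω + S) = 0 := by
  field_simp
  linear_combination hD

lemma smallerRoot_denominator_pos (hδ : 0 < δ) (hωS : 0 < ω + S) (hS : S ≠ 0) (hD0 : 0 ≤ D)
    (hD : D ^ 2 = (α - (ω + S)) ^ 2 + δ * (δ + 2 * (α + ω + S))) :
    0 < ω + S * (1 - (α + δ + ω + S - D) / (2 * S)) := by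
  have hK : ω + S * (1 - (α + δ + ω + S - D) / (2 * S)) = (D - (α + δ - ω - S)) / 2 := by
    field_simp
    ring
  have hgap : (α + δ - ω - S) ^ 2 < D ^ 2 := by nlinarith
  have hlt : α + δ - ω - S < D := (le_abs_self _).trans_lt (abs_lt_of_sq_lt_sq hgap hD0)
  rw [hK]
  linarith

end Root

theorem stmt_0 (α δ ω S : ℝ) (hα : 0 < α) (hδ : 0 < δ) (hω : 0 < ω) (hS : 0 < S) :
    let q1 := (α + δ + ω + S - Real.sqrt ((α - (ω + S))^2 + δ*(δ + 2*(α + ω + S)))) / (2*S)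
    let q2 := ω / (ω + S*(1 - q1))
    (α + δ*q1*q2 + S*q1^2) / (α + δ + S) = q1 := by
  intro q1 q2
  have hD := Real.sq_sqrt (by positivity : 0 ≤ (α - (ω + S)) ^ 2 + δ * (δ + 2 * (α + ω + S)))
  exact fixedPoint_of_quadratic (by positivity)
    (smallerRoot_denominator_pos hδ (by positivity) hS.ne' (Real.sqrt_nonneg _) hD).ne'
    (quadratic_smallerRoot hS.ne' hD)
end

section
/- If α, δ, ω, S̄ > 0, then q1 = (α + δ + ω + S̄ − √((α − (ω + S̄))² + δ(δ + 2(α + ω + S̄))))/(2S̄) satisfies 0 < q1 < 1 if and only if S̄(δ + ω) > αω (i.e., R0 > 1 with β/μ = S̄). -/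
theorem stmt_3 (α δ ω S : ℝ) (hα : 0 < α) (hδ : 0 < δ) (hω : 0 < ω) (hS : 0 < S) :
    let q1 := (α + δ + ω + S - Real.sqrt ((α - (ω + S))^2 + δ*(δ + 2*(α + ω + S)))) / (2*S)
    (0 < q1 ∧ q1 < 1) ↔ S*(δ + ω) > α*ω := by
  intro q1
  have hD : 0 ≤ (α - (ω + S))^2 + δ*(δ + 2*(α + ω + S)) := by positivity
  set s := Real.sqrt ((α - (ω + S))^2 + δ*(δ + 2*(α + ω + S))) with hs
  have hs2 : s^2 = (α - (ω + S))^2 + δ*(δ + 2*(α + ω + S)) := Real.sq_sqrt hD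
  have hs0 : 0 ≤ s := Real.sqrt_nonneg _
  have h2S : 0 < 2*S := by linarith
  constructor
  · rintro ⟨h1, h2⟩
    have hA : 0 < α + δ + ω + S - s := by
      have := mul_pos h1 h2S
      rwa [div_mul_cancel₀ _ (ne_of_gt h2S)] at this
    have hB : s > α + δ + ω - S := by
      have := (div_lt_one h2S).mp h2
      linarith
    have hsub : 0 < s - (α + δ + ω - S) := by linarith
    rcases le_or_gt (s + (α + δ + ω - S)) 0 with hc | hc
    · have hS' : 0 ≤ S - (α + δ + ω) := by linarith
      nlinarith [mul_nonneg hS' (by linarith : (0:ℝ) ≤ δ + ω), mul_pos hδ hα, mul_pos hδ hω]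
    · nlinarith [mul_pos hsub hc, hs2]
  · intro h
    have hlt : s < α + δ + ω + S := by
      nlinarith [hs2, hs0, mul_pos hα hω, mul_pos hα hS]
    have hgt : s > α + δ + ω - S := by
      nlinarith [hs2, hs0]
    constructor
    · apply div_pos _ h2S
      linarith
    · rw [div_lt_one h2S]
      linarith
end

section
/- With Δ1 = m1/(a1+1), Δ2 = m2/(a2+1), and D = (αΔ2 − Δ1(S̄Δ2 + ω))² + δΔ2²(δ + 2α + 2S̄Δ1) + 2δωΔ1Δ2, the value q1 = (αΔ2 + δΔ2 + ωΔ1 + S̄Δ1Δ2 − √D)/(2S̄Δ1Δ2) together with q2 = ω/(ω + S̄Δ2(1 − q1)) satisfies the fixed point equation F(q1,q2) = (q1,q2), where F(u1,u2) = ((α + δu1u2 + S̄Δ1u1²)/(α + δ + S̄Δ1), (ω + S̄Δ2u1u2)/(ω + S̄Δ2)), assuming all parameters positive and q1 < 1. -/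
/-!
Write `c₁ = SΔ₁`, `c₂ = SΔ₂`. The second fixed-point equation is equivalent to
`q₂ (ω + c₂(1 - q₁)) = ω`, which is how `q₂` is defined. Substituting it into the first equation
and clearing denominators leaves `(1 - q₁) Q(q₁) = 0`, where
`Q(q) = (α - c₁q)(ω + c₂(1 - q)) - δc₂q`; the factor `1 - q₁` reflects the trivial fixed point
`(1, 1)`. `Q` is a quadratic with leading coefficient `S²Δ₁Δ₂` and discriminant `S²D`, and the
given `q₁` is its smaller root.
-/

namespace SIV

def fixedPointQuadratic (α δ ω c₁ c₂ q : ℝ) : ℝ :=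
  (α - c₁ * q) * (ω + c₂ * (1 - q)) - δ * c₂ * q

theorem snd_fixed {ω c q : ℝ} (hW : ω + c * (1 - q) ≠ 0) (hc : ω + c ≠ 0) :
    (ω + c * q * (ω / (ω + c * (1 - q)))) / (ω + c) = ω / (ω + c * (1 - q)) := by
  rw [div_eq_iff hc]
  field_simp
  ring

theorem fst_fixed_of_fixedPointQuadratic_eq_zero {α δ ω c₁ c₂ q : ℝ}
    (hW : ω + c₂ * (1 - q) ≠ 0) (hA : α + δ + c₁ ≠ 0)
    (hQ : fixedPointQuadratic α δ ω c₁ c₂ q = 0) :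
    (α + δ * q * (ω / (ω + c₂ * (1 - q))) + c₁ * q ^ 2) / (α + δ + c₁) = q := by
  rw [div_eq_iff hA]
  field_simp
  unfold fixedPointQuadratic at hQ
  linear_combination (1 - q) * hQ

theorem fixedPointQuadratic_smaller_root {α δ ω S Δ₁ Δ₂ D q : ℝ}
    (hS : S ≠ 0) (hΔ₁ : Δ₁ ≠ 0) (hΔ₂ : Δ₂ ≠ 0) (hD₀ : 0 ≤ D)
    (hD : D = (α*Δ₂ - Δ₁*(S*Δ₂ + ω))^2 + δ*Δ₂^2*(δ + 2*α + 2*S*Δ₁) + 2*δ*ω*Δ₁*Δ₂)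
    (hq : q = (α*Δ₂ + δ*Δ₂ + ω*Δ₁ + S*Δ₁*Δ₂ - Real.sqrt D)/(2*S*Δ₁*Δ₂)) :
    fixedPointQuadratic α δ ω (S * Δ₁) (S * Δ₂) q = 0 := by
  set B := α*Δ₂ + δ*Δ₂ + ω*Δ₁ + S*Δ₁*Δ₂
  have hexpand : fixedPointQuadratic α δ ω (S * Δ₁) (S * Δ₂) q =
      S^2*Δ₁*Δ₂ * (q * q) + -(S * B) * q + α * (S*Δ₂ + ω) := by
    unfold fixedPointQuadratic; ring
  have hdiscrim : discrim (S^2*Δ₁*Δ₂) (-(S * B)) (α * (S*Δ₂ + ω)) =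
      (S * Real.sqrt D) * (S * Real.sqrt D) := by
    rw [discrim]
    linear_combination (-S^2) * Real.mul_self_sqrt hD₀ - S^2 * hD
  rw [hexpand, quadratic_eq_zero_iff (by positivity) hdiscrim]
  right
  rw [hq]
  field_simp

end SIV

open SIV in
theorem stmt_9 (α δ ω S m1 m2 a1 a2 : ℝ) (hα : 0 < α) (hδ : 0 < δ) (hω : 0 < ω)
    (hS : 0 < S) (hm1 : 0 < m1) (hm2 : 0 < m2) (ha1 : 0 < a1) (ha2 : 0 < a2)
    (Δ1 Δ2 D q1 q2 : ℝ)
    (hΔ1 : Δ1 = m1/(a1+1)) (hΔ2 : Δ2 = m2/(a2+1))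
    (hD : D = (α*Δ2 - Δ1*(S*Δ2 + ω))^2 + δ*Δ2^2*(δ + 2*α + 2*S*Δ1) + 2*δ*ω*Δ1*Δ2)
    (hq1 : q1 = (α*Δ2 + δ*Δ2 + ω*Δ1 + S*Δ1*Δ2 - Real.sqrt D)/(2*S*Δ1*Δ2))
    (hq2 : q2 = ω/(ω + S*Δ2*(1 - q1)))
    (hq1lt : q1 < 1) :
    (α + δ*q1*q2 + S*Δ1*q1^2)/(α + δ + S*Δ1) = q1 ∧
    (ω + S*Δ2*q1*q2)/(ω + S*Δ2) = q2 := by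
  have hΔ1pos : 0 < Δ1 := by rw [hΔ1]; positivity
  have hΔ2pos : 0 < Δ2 := by rw [hΔ2]; positivity
  have hW : 0 < ω + S*Δ2*(1 - q1) := by
    have := sub_pos.mpr hq1lt
    positivity
  have hQ : fixedPointQuadratic α δ ω (S*Δ1) (S*Δ2) q1 = 0 :=
    fixedPointQuadratic_smaller_root hS.ne' hΔ1pos.ne' hΔ2pos.ne' (by rw [hD]; positivity) hD hq1
  subst hq2
  exact ⟨fst_fixed_of_fixedPointQuadratic_eq_zero hW.ne' (by positivity) hQ,
    snd_fixed hW.ne' (by positivity)⟩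
end
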